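/- arXiv:math-ph/0403056 — 2 statements merged into one kernel-verified Lean document; each statement's English description precedes it below -/
import Mathlib

section
/- Let m ≥ 1, q : ℝ^m → ℂ, and let φ, ψ : ℝ^m → ℂ be C² functions satisfying (−Δψ + qψ) = 0 and (−Δφ + conj(q)φ) = 0 on ℝ^m. Set Wᵢ = conj(φ)·∂ψ/∂xᵢ − ∂(conj φ)/∂xᵢ·ψ. Then for every rectangular box [a,b] = Π_{i=1}^m [aᵢ,bᵢ] ⊂ ℝ^m (with aᵢ ≤ bᵢ), the total flux of W through the boundary vanishes: Σ_{i=1}^m ( ∫_{F_i(b_i)} Wᵢ d𝜆_{m−1} − ∫_{F_i(a_i)} Wᵢ d𝜆_{m−1} ) = 0, where F_i(c) denotes the face {x ∈ [a,b] : xᵢ = c} equipped with (m−1)-dimensional Lebesgue measure. -/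
/-!
Expanding `∂ᵢWᵢ` by the product rule, the mixed terms `∂ᵢ(conj φ)·∂ᵢψ` cancel, so
`div W = conj φ · Δψ − conj (Δφ) · ψ = conj φ · qψ − conj (conj q · φ) · ψ = 0`.
The divergence theorem on the box then turns this into the vanishing of the boundary flux.
-/

open scoped BigOperators
open MeasureTheory

/-- Partial derivative of a `ℂ`-valued function on `ℝ^m` in direction `i`. -/
noncomputable def pd5 {m : ℕ} (f : (Fin m → ℝ) → ℂ) (i : Fin m) (x : Fin m → ℝ) : ℂ :=
  fderiv ℝ f x (Pi.single i 1)

/-- Second partial derivative `∂²f/∂xᵢ²` as an iterated first partial. -/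
noncomputable def pd5sq {m : ℕ} (f : (Fin m → ℝ) → ℂ) (i : Fin m) (x : Fin m → ℝ) : ℂ :=
  pd5 (fun y => pd5 f i y) i x

/-- The Lagrange current `Wᵢ = conj(φ)·∂ᵢψ − ∂ᵢ(conj φ)·ψ` of the perturbed Laplace
operator. -/
noncomputable def lagrangeCurrent5 {m : ℕ} (φ ψ : (Fin m → ℝ) → ℂ) (i : Fin m)
    (y : Fin m → ℝ) : ℂ :=
  (starRingEnd ℂ) (φ y) * pd5 ψ i y - pd5 (fun z => (starRingEnd ℂ) (φ z)) i y * ψ y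

section PartialDerivatives

variable {m : ℕ}

lemma contDiff_pd5 {k : WithTop ℕ∞} {f : (Fin m → ℝ) → ℂ} (hf : ContDiff ℝ (k + 1) f)
    (i : Fin m) : ContDiff ℝ k (pd5 f i) :=
  (hf.fderiv_right le_rfl).clm_apply contDiff_const

lemma pd5_conj {f : (Fin m → ℝ) → ℂ} {x : Fin m → ℝ} (hf : DifferentiableAt ℝ f x)
    (i : Fin m) : pd5 (fun z => starRingEnd ℂ (f z)) i x = starRingEnd ℂ (pd5 f i x) := by
  have h : HasFDerivAt (fun z => starRingEnd ℂ (f z))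
      ((Complex.conjCLE : ℂ →L[ℝ] ℂ).comp (fderiv ℝ f x)) x :=
    (Complex.conjCLE : ℂ →L[ℝ] ℂ).hasFDerivAt.comp x hf.hasFDerivAt
  simp [pd5, h.fderiv]

lemma pd5_sub {f g : (Fin m → ℝ) → ℂ} {x : Fin m → ℝ} (hf : DifferentiableAt ℝ f x)
    (hg : DifferentiableAt ℝ g x) (i : Fin m) :
    pd5 (fun y => f y - g y) i x = pd5 f i x - pd5 g i x := by
  simp [pd5, fderiv_fun_sub hf hg]

lemma pd5_mul {f g : (Fin m → ℝ) → ℂ} {x : Fin m → ℝ} (hf : DifferentiableAt ℝ f x)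
    (hg : DifferentiableAt ℝ g x) (i : Fin m) :
    pd5 (fun y => f y * g y) i x = pd5 f i x * g x + f x * pd5 g i x := by
  simp only [pd5, fderiv_fun_mul hf hg, add_apply, FunLike.coe_smul, Pi.smul_apply, smul_eq_mul]
  ring

lemma pd5sq_conj {f : (Fin m → ℝ) → ℂ} (hf : ContDiff ℝ 2 f) (i : Fin m) (x : Fin m → ℝ) :
    pd5sq (fun z => starRingEnd ℂ (f z)) i x = starRingEnd ℂ (pd5sq f i x) := by
  have hf₁ : Differentiable ℝ f := hf.differentiable two_ne_zero
  have h : pd5 (fun z => starRingEnd ℂ (f z)) i = fun y => starRingEnd ℂ (pd5 f i y) :=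
    funext fun y => pd5_conj (hf₁ y) i
  rw [pd5sq, h, pd5_conj (((contDiff_pd5 hf i).differentiable one_ne_zero) x)]
  rfl

end PartialDerivatives

section LagrangeCurrent

variable {m : ℕ} {φ ψ : (Fin m → ℝ) → ℂ}

lemma differentiable_lagrangeCurrent5 (hφ : ContDiff ℝ 2 φ) (hψ : ContDiff ℝ 2 ψ)
    (i : Fin m) : Differentiable ℝ (lagrangeCurrent5 φ ψ i) := by
  have hcφ : ContDiff ℝ 2 fun z => starRingEnd ℂ (φ z) := Complex.conjCLE.contDiff.comp hφ
  exact ((hcφ.differentiable two_ne_zero).mul ((contDiff_pd5 hψ i).differentiable one_ne_zero)).sub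
    (((contDiff_pd5 hcφ i).differentiable one_ne_zero).mul (hψ.differentiable two_ne_zero))

lemma pd5_lagrangeCurrent5 (hφ : ContDiff ℝ 2 φ) (hψ : ContDiff ℝ 2 ψ) (i : Fin m)
    (x : Fin m → ℝ) :
    pd5 (lagrangeCurrent5 φ ψ i) i x =
      starRingEnd ℂ (φ x) * pd5sq ψ i x - starRingEnd ℂ (pd5sq φ i x) * ψ x := by
  set cφ : (Fin m → ℝ) → ℂ := fun z => starRingEnd ℂ (φ z)
  have hcφ : ContDiff ℝ 2 cφ := Complex.conjCLE.contDiff.comp hφ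
  have hcφ₁ : Differentiable ℝ cφ := hcφ.differentiable two_ne_zero
  have hψ₁ : Differentiable ℝ ψ := hψ.differentiable two_ne_zero
  have hdψ : Differentiable ℝ (pd5 ψ i) := (contDiff_pd5 hψ i).differentiable one_ne_zero
  have hdcφ : Differentiable ℝ (pd5 cφ i) := (contDiff_pd5 hcφ i).differentiable one_ne_zero
  change pd5 (fun y => cφ y * pd5 ψ i y - pd5 cφ i y * ψ y) i x = _
  rw [pd5_sub ((hcφ₁ x).fun_mul (hdψ x)) ((hdcφ x).fun_mul (hψ₁ x)), pd5_mul (hcφ₁ x) (hdψ x),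
    pd5_mul (hdcφ x) (hψ₁ x), ← pd5sq, ← pd5sq, pd5sq_conj hφ]
  ring

lemma sum_pd5_lagrangeCurrent5_eq_zero {q : (Fin m → ℝ) → ℂ} (hφ : ContDiff ℝ 2 φ)
    (hψ : ContDiff ℝ 2 ψ) (hLψ : ∀ x, -(∑ i, pd5sq ψ i x) + q x * ψ x = 0)
    (hLφ : ∀ x, -(∑ i, pd5sq φ i x) + starRingEnd ℂ (q x) * φ x = 0) (x : Fin m → ℝ) :
    ∑ i, pd5 (lagrangeCurrent5 φ ψ i) i x = 0 := by
  have hΔψ : ∑ i, pd5sq ψ i x = q x * ψ x := by linear_combination -hLψ x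
  have hΔφ : ∑ i, pd5sq φ i x = starRingEnd ℂ (q x) * φ x := by linear_combination -hLφ x
  simp only [pd5_lagrangeCurrent5 hφ hψ, Finset.sum_sub_distrib, ← Finset.mul_sum,
    ← Finset.sum_mul, ← map_sum, hΔψ, hΔφ, map_mul, Complex.conj_conj]
  ring

end LagrangeCurrent

theorem box_flux_eq_zero_of_divergence_free {n : ℕ} {E : Type*} [NormedAddCommGroup E]
    [NormedSpace ℝ E] [CompleteSpace E] {F : Fin (n + 1) → (Fin (n + 1) → ℝ) → E}
    (hF : ∀ i, Differentiable ℝ (F i))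
    (hdiv : ∀ x, ∑ i, fderiv ℝ (F i) x (Pi.single i 1) = 0) {a b : Fin (n + 1) → ℝ}
    (hab : a ≤ b) :
    ∑ i : Fin (n + 1),
      ((∫ y in Set.Icc (a ∘ i.succAbove) (b ∘ i.succAbove), F i (i.insertNth (b i) y)) -
        ∫ y in Set.Icc (a ∘ i.succAbove) (b ∘ i.succAbove), F i (i.insertNth (a i) y)) = 0 := by
  have hdiv' : (fun x => ∑ i, fderiv ℝ (F i) x (Pi.single i 1)) = 0 := funext hdiv
  rw [← integral_divergence_of_hasFDerivAt_off_countable' a b hab F (fun i => fderiv ℝ (F i)) ∅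
    Set.countable_empty (fun i => (hF i).continuous.continuousOn)
    (fun x _ i => (hF i x).hasFDerivAt) (by rw [hdiv']; exact integrableOn_zero), hdiv']
  simp

/-- Stokes-theorem consequence (2.8): for kernel elements of `L = −Δ + q` and of
`L* = −Δ + conj q`, the total flux of the Lagrange current through the boundary of
any rectangular box vanishes.  The face `Fᵢ(c)` of the box `[a,b] ⊆ ℝ^{n+1}` is
parametrized by the remaining coordinates via `Fin.insertNth i c`, and carries
`(m−1)`-dimensional Lebesgue measure. -/
theorem flux_through_box_boundary_vanishes (n : ℕ)
    (q φ ψ : (Fin (n + 1) → ℝ) → ℂ) (hφ : ContDiff ℝ 2 φ) (hψ : ContDiff ℝ 2 ψ)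
    (hLψ : ∀ x, -(∑ i, pd5sq ψ i x) + q x * ψ x = 0)
    (hLφ : ∀ x, -(∑ i, pd5sq φ i x) + (starRingEnd ℂ) (q x) * φ x = 0)
    (a b : Fin (n + 1) → ℝ) (hab : ∀ i, a i ≤ b i) :
    ∑ i : Fin (n + 1),
      ((∫ y in Set.Icc (a ∘ i.succAbove) (b ∘ i.succAbove),
          lagrangeCurrent5 φ ψ i (i.insertNth (b i) y)) -
        ∫ y in Set.Icc (a ∘ i.succAbove) (b ∘ i.succAbove),
          lagrangeCurrent5 φ ψ i (i.insertNth (a i) y)) = 0 :=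
  box_flux_eq_zero_of_divergence_free (differentiable_lagrangeCurrent5 hφ hψ)
    (sum_pd5_lagrangeCurrent5_eq_zero hφ hψ hLψ hLφ) hab
end

section
/- Let H be a complex Hilbert space, r ∈ ℕ, L₀, …, L_r : H → H continuous linear operators, λ ∈ ℂ and φ ∈ H. Define v : ℝ → H by v(τ) = exp(−conj(λ)·τ) • φ. Then for every τ ∈ ℝ: Σ_{i=0}^r (−1)^i Lᵢ* ( (d^i v/dτ^i)(τ) ) = exp(−conj(λ)·τ) • ( Σ_{i=0}^r λ^i Lᵢ )* φ, where Lᵢ* denotes the Hilbert-space adjoint and d^i v/dτ^i the i-th iterated derivative. Consequently, v satisfies the formally adjoint operator differential equation Σ_{i=0}^r (−1)^i Lᵢ* v^{(i)}(τ) = 0 for all τ ∈ ℝ if and only if (Σ_{i=0}^r λ^i Lᵢ)* φ = 0. -/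
open scoped BigOperators
open ContinuousLinearMap

private lemma exp_smul_iteratedDeriv
    {H : Type*} [NormedAddCommGroup H] [NormedSpace ℂ H]
    (c : ℂ) (ψ : H) (n : ℕ) :
    (iteratedDeriv n (fun t : ℝ => Complex.exp (c * t) • ψ))
      = fun τ : ℝ => (c ^ n * Complex.exp (c * τ)) • ψ := by
  induction n with
  | zero => simp [iteratedDeriv_zero]
  | succ n ih =>
    rw [iteratedDeriv_succ, ih]
    funext τ
    have h1 : HasDerivAt (fun t : ℝ => c * (t : ℂ)) c τ := by
      simpa using (Complex.ofRealCLM.hasDerivAt (x := τ)).const_mul c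
    have h2 : HasDerivAt (fun t : ℝ => (c ^ n * Complex.exp (c * t)) • ψ)
        ((c ^ n * (Complex.exp (c * τ) * c)) • ψ) τ := by
      exact ((h1.cexp).const_mul (c ^ n)).smul_const ψ
    rw [h2.deriv]
    ring_nf

/-- Adjoint half of the separation-of-variables correspondence (4.16): for an affine
pencil `L(λ) = ∑_{i=0}^r λ^i Lᵢ` of continuous linear operators on a complex Hilbert
space and `v(τ) = e^{−conj(λ)τ} • φ`, one has
`∑ᵢ (−1)^i Lᵢ* v^{(i)}(τ) = e^{−conj(λ)τ} • (∑ᵢ λ^i Lᵢ)* φ`, and hence `v` solves the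
formally adjoint equation `∑ᵢ (−1)^i Lᵢ* v^{(i)} = 0` iff `(∑ᵢ λ^i Lᵢ)* φ = 0`. -/
theorem pencil_adjoint_separation_of_variables
    {H : Type*} [NormedAddCommGroup H] [InnerProductSpace ℂ H] [CompleteSpace H]
    (r : ℕ) (L : Fin (r + 1) → (H →L[ℂ] H)) (lam : ℂ) (φ : H) :
    (∀ τ : ℝ,
        ∑ i : Fin (r + 1),
          ((-1 : ℂ) ^ (i : ℕ)) •
            (adjoint (L i))
              (iteratedDeriv (i : ℕ)
                (fun t : ℝ => Complex.exp (-(starRingEnd ℂ) lam * t) • φ) τ)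
        = Complex.exp (-(starRingEnd ℂ) lam * τ) •
            (adjoint (∑ i : Fin (r + 1), lam ^ (i : ℕ) • L i)) φ)
      ∧ ((∀ τ : ℝ,
            ∑ i : Fin (r + 1),
              ((-1 : ℂ) ^ (i : ℕ)) •
                (adjoint (L i))
                  (iteratedDeriv (i : ℕ)
                    (fun t : ℝ => Complex.exp (-(starRingEnd ℂ) lam * t) • φ) τ) = 0)
          ↔ (adjoint (∑ i : Fin (r + 1), lam ^ (i : ℕ) • L i)) φ = 0) := by
  set c : ℂ := -(starRingEnd ℂ) lam with hc
  have key : ∀ τ : ℝ,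
      ∑ i : Fin (r + 1),
        ((-1 : ℂ) ^ (i : ℕ)) •
          (adjoint (L i))
            (iteratedDeriv (i : ℕ) (fun t : ℝ => Complex.exp (c * t) • φ) τ)
      = Complex.exp (c * τ) •
          (adjoint (∑ i : Fin (r + 1), lam ^ (i : ℕ) • L i)) φ := by
    intro τ
    have hadj : adjoint (∑ i : Fin (r + 1), lam ^ (i : ℕ) • L i)
        = ∑ i : Fin (r + 1), (starRingEnd ℂ) (lam ^ (i : ℕ)) • adjoint (L i) := by
      rw [map_sum]
      exact Finset.sum_congr rfl fun i _ => by
        exact (ContinuousLinearMap.adjoint : (H →L[ℂ] H) ≃ₗᵢ⋆[ℂ] (H →L[ℂ] H)).map_smulₛₗ _ _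
    rw [hadj]
    simp only [exp_smul_iteratedDeriv c φ, map_smul, ContinuousLinearMap.sum_apply,
      ContinuousLinearMap.smul_apply, Finset.smul_sum, smul_smul]
    refine Finset.sum_congr rfl fun i _ => ?_
    congr 1
    rw [hc, map_pow]
    have : ((-1 : ℂ)) ^ (i : ℕ) * (-(starRingEnd ℂ) lam) ^ (i : ℕ)
        = ((starRingEnd ℂ) lam) ^ (i : ℕ) := by
      rw [← mul_pow]; ring_nf
    rw [← mul_assoc, this]; ring
  refine ⟨key, ?_, ?_⟩
  · intro h
    have h0 := h 0
    rw [key 0] at h0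
    simpa [Complex.exp_ne_zero] using h0
  · intro h τ
    rw [key τ, h, smul_zero]
end
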